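/- arXiv:2605.01755 — 5 statements merged into one kernel-verified Lean document; each statement's English description precedes it below -/
import Mathlib

section
/- Let F : [0,∞) → [0,∞) be increasing and concave with F(0) = 0 and F(1) = 1, and let G(u) = u - 1 - ln u. Then for all x, y > 0 with F(y) > 0, the quantity B(x,y) = G(1/x) + G(x·F(y)/y) - G(F(y)) + G(y) is nonnegative. Moreover B(x,y) = 0 if and only if x = 1 and F(y) = y. -/
/-!
Since the logarithms cancel, the bracket equals `1/x + x c/y + y - c - 2` with `c = F y`.
Concavity and `F 0 = 0` make `F t / t` antitone, which together with monotonicity puts `c`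
between `y` and `1`. Writing `c = u²`, `y = v²`, the bracket times `x v²` is
`(v - x u)² + x v (u - v)(2 - v² - u v)`, and `c` lying between `y` and `1` is exactly what
makes the second summand nonnegative, vanishing only for `u = v`.
-/

open Set

noncomputable def G (u : ℝ) : ℝ := u - 1 - Real.log u

lemma G_bracket_eq {x y c : ℝ} (hx : 0 < x) (hy : 0 < y) (hc : 0 < c) :
    G (1/x) + G (x * c / y) - G c + G y = 1/x + x * c / y + y - c - 2 := by
  simp only [G, one_div, Real.log_inv, Real.log_div (mul_pos hx hc).ne' hy.ne',
    Real.log_mul hx.ne' hc.ne']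
  ring

lemma apply_mem_uIcc_of_monotoneOn_of_concaveOn {F : ℝ → ℝ} (hmono : MonotoneOn F (Ici 0))
    (hconc : ConcaveOn ℝ (Ici 0) F) (hF0 : F 0 = 0) (hF1 : F 1 = 1) {y : ℝ} (hy : 0 < y) :
    F y ∈ uIcc y 1 := by
  have slope_anti {a b : ℝ} (ha : 0 < a) (hab : a ≤ b) : F b / b ≤ F a / a := by
    have := hconc.neg.secant_mono (a := 0) self_mem_Ici ha.le (ha.trans_le hab).le
      ha.ne' (ha.trans_le hab).ne' hab
    simpa [hF0, neg_div] using this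
  rcases le_total y 1 with hy1 | hy1
  · refine Icc_subset_uIcc ⟨?_, hF1 ▸ hmono hy.le (mem_Ici.2 zero_le_one) hy1⟩
    simpa [hF1, le_div_iff₀ hy] using slope_anti hy hy1
  · refine Icc_subset_uIcc' ⟨hF1 ▸ hmono (mem_Ici.2 zero_le_one) (mem_Ici.2 (zero_le_one.trans hy1)) hy1, ?_⟩
    simpa [hF1, div_le_iff₀ hy] using slope_anti one_pos hy1

lemma sub_mul_two_sub_nonneg {u v : ℝ} (hv : 0 ≤ v) (h : u ∈ uIcc v 1) :
    0 ≤ (u - v) * (2 - v ^ 2 - u * v) := by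
  rcases mem_uIcc.1 h with ⟨hvu, hu1⟩ | ⟨hu1, huv⟩
  · exact mul_nonneg (by linarith) (by nlinarith)
  · exact mul_nonneg_of_nonpos_of_nonpos (by linarith) (by nlinarith)

lemma eq_of_sub_mul_two_sub_eq_zero {u v : ℝ} (hv : 0 ≤ v) (h : u ∈ uIcc v 1)
    (h0 : (u - v) * (2 - v ^ 2 - u * v) = 0) : u = v := by
  rcases mul_eq_zero.1 h0 with h0 | h0
  · linarith
  · rcases mem_uIcc.1 h with ⟨hvu, hu1⟩ | ⟨hu1, huv⟩ <;> nlinarith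

lemma mul_bracket_eq {x u v : ℝ} (hx : x ≠ 0) (hv : v ≠ 0) :
    x * v ^ 2 * (1/x + x * u ^ 2 / v ^ 2 + v ^ 2 - u ^ 2 - 2)
      = (v - x * u) ^ 2 + x * v * ((u - v) * (2 - v ^ 2 - u * v)) := by
  field_simp
  ring

lemma bracket_nonneg_and_eq_zero_iff {x y c : ℝ} (hx : 0 < x) (hy : 0 < y) (hc : c ∈ uIcc y 1) :
    0 ≤ 1/x + x * c / y + y - c - 2 ∧ (1/x + x * c / y + y - c - 2 = 0 ↔ x = 1 ∧ c = y) := by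
  set u := √c
  set v := √y
  have hc0 : 0 < c := (lt_min hy one_pos).trans_le hc.1
  have hv : 0 < v := Real.sqrt_pos.2 hy
  have huv : u ∈ uIcc v 1 := by
    simpa using Real.sqrt_monotone.mapsTo_uIcc hc
  have key : x * y * (1/x + x * c / y + y - c - 2)
      = (v - x * u) ^ 2 + x * v * ((u - v) * (2 - v ^ 2 - u * v)) := by
    rw [← mul_bracket_eq hx.ne' hv.ne', Real.sq_sqrt hc0.le, Real.sq_sqrt hy.le]
  have hsq : 0 ≤ (v - x * u) ^ 2 := sq_nonneg _
  have hgap : 0 ≤ x * v * ((u - v) * (2 - v ^ 2 - u * v)) :=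
    mul_nonneg (by positivity) (sub_mul_two_sub_nonneg hv.le huv)
  have hxy : 0 < x * y := mul_pos hx hy
  refine ⟨(mul_nonneg_iff_of_pos_left hxy).1 (key ▸ add_nonneg hsq hgap), ⟨fun h0 => ?_, ?_⟩⟩
  · rw [h0, mul_zero, eq_comm, add_eq_zero_iff_of_nonneg hsq hgap] at key
    have hvu : v = x * u := sub_eq_zero.1 (pow_eq_zero_iff two_ne_zero |>.1 key.1)
    have hu : u = v := eq_of_sub_mul_two_sub_eq_zero hv.le huv <|
      (mul_eq_zero.1 key.2).resolve_left (by positivity)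
    refine ⟨?_, ?_⟩
    · rw [hu] at hvu
      nlinarith
    · rw [← Real.sq_sqrt hc0.le, ← Real.sq_sqrt hy.le]
      exact congrArg (· ^ 2) hu
  · rintro ⟨rfl, rfl⟩
    field_simp
    ring

theorem entropy_bracket_general (F : ℝ → ℝ)
    (hmono : MonotoneOn F (Set.Ici (0:ℝ)))
    (hconc : ConcaveOn ℝ (Set.Ici (0:ℝ)) F)
    (hF0 : F 0 = 0) (hF1 : F 1 = 1)
    (x y : ℝ) (hx : 0 < x) (hy : 0 < y) :
    0 ≤ G (1/x) + G (x * F y / y) - G (F y) + G y ∧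
    (G (1/x) + G (x * F y / y) - G (F y) + G y = 0 ↔ x = 1 ∧ F y = y) := by
  have hc : F y ∈ uIcc y 1 := apply_mem_uIcc_of_monotoneOn_of_concaveOn hmono hconc hF0 hF1 hy
  rw [G_bracket_eq hx hy ((lt_min hy one_pos).trans_le hc.1)]
  exact bracket_nonneg_and_eq_zero_iff hx hy hc

theorem entropy_bracket (F : ℝ → ℝ)
    (hmono : MonotoneOn F (Set.Ici (0:ℝ)))
    (hconc : ConcaveOn ℝ (Set.Ici (0:ℝ)) F)
    (hnn : ∀ t ≥ (0:ℝ), 0 ≤ F t)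
    (hF0 : F 0 = 0) (hF1 : F 1 = 1)
    (x y : ℝ) (hx : 0 < x) (hy : 0 < y) (hFy : 0 < F y) :
    0 ≤ G (1/x) + G (x * F y / y) - G (F y) + G y ∧
    (G (1/x) + G (x * F y / y) - G (F y) + G y = 0 ↔ x = 1 ∧ F y = y) :=
  entropy_bracket_general F hmono hconc hF0 hF1 x y hx hy
end

section
/- If F : [0,∞) → ℝ is increasing and concave with F(0) = 0 and F(1) = 1, and G(u) = u - 1 - ln u, then G(F(y)) ≤ G(y) for all y > 0 with F(y) > 0. -/
lemma G_mono_aux {u v : ℝ} (hu : 1 ≤ u) (huv : u ≤ v) : G u ≤ G v := by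
  have hu0 : 0 < u := lt_of_lt_of_le one_pos hu
  have hv0 : 0 < v := lt_of_lt_of_le hu0 huv
  have h1 : Real.log (v / u) ≤ v / u - 1 := Real.log_le_sub_one_of_pos (by positivity)
  have h2 : Real.log (v / u) = Real.log v - Real.log u := Real.log_div hv0.ne' hu0.ne'
  have h4 : v / u - 1 ≤ v - u := by
    rw [div_sub_one hu0.ne', div_le_iff₀ hu0]
    nlinarith
  simp only [G]; linarith

lemma G_anti_aux {u v : ℝ} (hu : 0 < u) (huv : u ≤ v) (hv : v ≤ 1) : G v ≤ G u := by
  have hv0 : 0 < v := lt_of_lt_of_le hu huv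
  have h1 : Real.log (u / v) ≤ u / v - 1 := Real.log_le_sub_one_of_pos (by positivity)
  have h2 : Real.log (u / v) = Real.log u - Real.log v := Real.log_div hu.ne' hv0.ne'
  have h4 : u / v - 1 ≤ u - v := by
    rw [div_sub_one hv0.ne', div_le_iff₀ hv0]
    nlinarith
  simp only [G]; linarith

theorem G_of_F_le_G (F : ℝ → ℝ)
    (hmono : MonotoneOn F (Set.Ici (0:ℝ)))
    (hconc : ConcaveOn ℝ (Set.Ici (0:ℝ)) F)
    (hF0 : F 0 = 0) (hF1 : F 1 = 1)
    (y : ℝ) (hy : 0 < y) (hFy : 0 < F y) :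
    G (F y) ≤ G y := by
  rcases le_or_gt y 1 with hy1 | hy1
  · -- y ≤ 1 : y ≤ F y ≤ 1
    have hFle : F y ≤ 1 :=
      hF1 ▸ hmono (Set.mem_Ici.mpr hy.le) (Set.mem_Ici.mpr zero_le_one) hy1
    have hyle : y ≤ F y := by
      have := hconc.2 (Set.mem_Ici.mpr zero_le_one) (Set.mem_Ici.mpr le_rfl)
        hy.le (by linarith : (0:ℝ) ≤ 1 - y) (by ring)
      simp only [smul_eq_mul, hF0, hF1, mul_one, mul_zero, add_zero] at this
      simpa using this
    exact G_anti_aux hy hyle hFle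
  · -- y > 1 : 1 ≤ F y ≤ y
    have h1F : 1 ≤ F y :=
      hF1 ▸ hmono (Set.mem_Ici.mpr zero_le_one) (Set.mem_Ici.mpr hy.le) hy1.le
    have hFley : F y ≤ y := by
      have key := hconc.2 (Set.mem_Ici.mpr hy.le) (Set.mem_Ici.mpr le_rfl)
        (by positivity : (0:ℝ) ≤ 1/y)
        (by
          have : 1/y ≤ 1 := by rw [div_le_one hy]; linarith
          linarith : (0:ℝ) ≤ 1 - 1/y) (by ring)
      simp only [smul_eq_mul, hF0, hF1, mul_zero, add_zero] at key
      rw [one_div, inv_mul_cancel₀ hy.ne', hF1] at key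
      -- key : y⁻¹ * F y ≤ 1
      have := mul_le_mul_of_nonneg_left key hy.le
      rw [mul_one, ← mul_assoc, mul_inv_cancel₀ hy.ne', one_mul] at this
      exact this
    exact G_mono_aux h1F hFley
end

section
/- Let α₁,…,αₙ > 0 sum to 1, let y₁,…,yₙ > 0, u > 0, ȳ = Σⱼ αⱼ yⱼ, and define 𝓑(u,y) = (1 - 1/u)(1 - u·ȳ) + Σⱼ αⱼ (1 - 1/yⱼ)(u·ȳ - yⱼ). Then 𝓑(u,y) = 2 - 1/u - u·ȳ·Σⱼ αⱼ/yⱼ, and consequently 𝓑(u,y) ≤ -(G(u) + G(1/u)) ≤ 0, where G(v) = v - 1 - ln v. -/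
theorem bracket_identity_and_sign (n : ℕ) (hn : 0 < n) (α y : Fin n → ℝ) (u : ℝ)
    (hα : ∀ j, 0 < α j) (hsum : ∑ j, α j = 1) (hy : ∀ j, 0 < y j) (hu : 0 < u) :
    (1 - 1/u) * (1 - u * (∑ j, α j * y j)) +
      ∑ j, α j * (1 - 1 / y j) * (u * (∑ k, α k * y k) - y j)
      = 2 - 1/u - u * (∑ j, α j * y j) * (∑ j, α j / y j) ∧
    2 - 1/u - u * (∑ j, α j * y j) * (∑ j, α j / y j) ≤ -(G u + G (1/u)) ∧
    -(G u + G (1/u)) ≤ 0 := by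
  set S := ∑ j, α j * y j with hS
  set T := ∑ j, α j / y j with hT
  have hexp : ∀ j, α j * (1 - 1 / y j) * (u * S - y j)
      = α j * (u*S) - α j * y j - (α j / y j) * (u*S) + α j := by
    intro j
    have hyj := (hy j).ne'
    field_simp
    ring
  have h1 : ∑ j, α j * (1 - 1 / y j) * (u * S - y j)
      = u*S - S - T*(u*S) + 1 := by
    rw [Finset.sum_congr rfl (fun j _ => hexp j)]
    rw [Finset.sum_add_distrib, Finset.sum_sub_distrib, Finset.sum_sub_distrib,
      ← Finset.sum_mul, ← Finset.sum_mul, hsum, ← hS, ← hT]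
    ring
  have hST : 1 ≤ S * T := by
    have key : (∑ j, Real.sqrt (α j * y j) * Real.sqrt (α j / y j))^2
        ≤ S * T := by
      have := Finset.sum_mul_sq_le_sq_mul_sq Finset.univ
        (fun j => Real.sqrt (α j * y j)) (fun j => Real.sqrt (α j / y j))
      have e1 : ∀ j : Fin n, Real.sqrt (α j * y j) ^ 2 = α j * y j := fun j =>
        Real.sq_sqrt (mul_nonneg (hα j).le (hy j).le)
      have e2 : ∀ j : Fin n, Real.sqrt (α j / y j) ^ 2 = α j / y j := fun j =>
        Real.sq_sqrt (div_nonneg (hα j).le (hy j).le)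
      simpa [e1, e2, hS, hT] using this
    have heq : ∀ j : Fin n, Real.sqrt (α j * y j) * Real.sqrt (α j / y j) = α j := by
      intro j
      rw [← Real.sqrt_mul (mul_nonneg (hα j).le (hy j).le)]
      have : α j * y j * (α j / y j) = (α j)^2 := by
        field_simp
        ring_nf
        rw [mul_assoc, mul_inv_cancel₀ (hy j).ne', mul_one]
      rw [this, Real.sqrt_sq (hα j).le]
    rw [Finset.sum_congr rfl (fun j _ => heq j), hsum] at key
    simpa using key
  have hS0 : 0 < S := by
    have := Finset.sum_pos (fun j _ => mul_pos (hα j) (hy j))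
      (Finset.univ_nonempty_iff.mpr ⟨⟨0, hn⟩⟩)
    simpa [hS] using this
  have hG : -(G u + G (1/u)) = 2 - u - 1/u := by
    simp [G, Real.log_div, Real.log_one, hu.ne']
    ring
  refine ⟨by rw [h1]; field_simp; ring, ?_, ?_⟩
  · rw [hG]
    have : u ≤ u * (S * T) := le_mul_of_one_le_right hu.le hST
    nlinarith
  · rw [hG]
    rw [one_div]
    nlinarith [sq_nonneg (u - 1), mul_inv_cancel₀ hu.ne', hu]
end

section
/- Existence and uniqueness of single-strain equilibrium: let φ(i) = β₁·((Λ - v₁ i)/μ)·g₁(i) - v₁ on [0, Λ/v₁], where g₁(i) = f₁(i)/i (g₁(0) = 1) is continuous, positive, and nonincreasing, and β₁, Λ, μ, v₁ > 0. Then φ is strictly decreasing, φ(Λ/v₁) = -v₁ < 0, φ(0) = v₁(R₁ - 1) with R₁ = β₁Λ/(μv₁), and φ has a root in (0, Λ/v₁) if and only if R₁ > 1; when it exists the root is unique. -/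
/-!
Write `φ i = c i * g₁ i - v₁` with `c i = β₁ (Λ - v₁ i) / μ`. On `[0, Λ/v₁]` the factor `c` is
nonnegative and strictly decreasing, and `g₁` is positive and nonincreasing, so their product is
strictly decreasing; hence `φ` has at most one zero. Since `φ (Λ/v₁) = -v₁ < 0`, the intermediate
value theorem gives a zero in the open interval exactly when `φ 0 = v₁ (R₁ - 1)` is positive.
-/

open Set

theorem StrictAntiOn.mul_antitoneOn_of_nonneg_of_pos {α R : Type*} [Preorder α]
    [Semiring R] [PartialOrder R] [IsStrictOrderedRing R] {f g : α → R} {s : Set α}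
    (hf : StrictAntiOn f s) (hg : AntitoneOn g s) (hf₀ : ∀ x ∈ s, 0 ≤ f x)
    (hg₀ : ∀ x ∈ s, 0 < g x) : StrictAntiOn (fun x => f x * g x) s := fun x hx y hy hxy =>
  calc f y * g y ≤ f y * g x := mul_le_mul_of_nonneg_left (hg hx hy hxy.le) (hf₀ y hy)
    _ < f x * g x := mul_lt_mul_of_pos_right (hf hx hy hxy) (hg₀ x hx)

theorem StrictAntiOn.exists_mem_Ioo_eq_iff {α δ : Type*} [ConditionallyCompleteLinearOrder α]
    [TopologicalSpace α] [OrderTopology α] [DenselyOrdered α] [LinearOrder δ]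
    [TopologicalSpace δ] [OrderClosedTopology δ] {f : α → δ} {a b : α} {y : δ} (hab : a ≤ b)
    (hf : StrictAntiOn f (Icc a b)) (hfc : ContinuousOn f (Icc a b)) (hb : f b < y) :
    (∃ x ∈ Ioo a b, f x = y) ↔ y < f a := by
  constructor
  · rintro ⟨x, hx, rfl⟩
    exact hf (left_mem_Icc.2 hab) (Ioo_subset_Icc_self hx) hx.1
  · intro ha
    exact intermediate_value_Ioo' hab hfc ⟨hb, ha⟩

theorem strictAnti_mul_sub_mul_div {β Λ μ v : ℝ} (hβ : 0 < β) (hμ : 0 < μ) (hv : 0 < v) :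
    StrictAnti fun i => β * ((Λ - v * i) / μ) := fun x y hxy => by
  dsimp only
  gcongr

theorem mul_sub_mul_div_nonneg {β Λ μ v i : ℝ} (hβ : 0 < β) (hμ : 0 < μ) (hv : 0 < v)
    (hi : i ≤ Λ / v) : 0 ≤ β * ((Λ - v * i) / μ) := by
  have : v * i ≤ Λ := (le_div_iff₀' hv).1 hi
  have : 0 ≤ Λ - v * i := sub_nonneg.2 this
  positivity

theorem single_strain_equilibrium
    (Λ μ β₁ v₁ : ℝ) (hΛ : 0 < Λ) (hμ : 0 < μ) (hβ₁ : 0 < β₁) (hv₁ : 0 < v₁)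
    (g₁ : ℝ → ℝ)
    (hg₁c : ContinuousOn g₁ (Set.Icc 0 (Λ / v₁)))
    (hg₁0 : g₁ 0 = 1)
    (hg₁pos : ∀ i ∈ Set.Icc (0:ℝ) (Λ / v₁), 0 < g₁ i ∧ g₁ i ≤ 1)
    (hg₁anti : AntitoneOn g₁ (Set.Icc 0 (Λ / v₁))) :
    StrictAntiOn (fun i => β₁ * ((Λ - v₁ * i) / μ) * g₁ i - v₁) (Set.Icc 0 (Λ / v₁)) ∧
    β₁ * ((Λ - v₁ * (Λ / v₁)) / μ) * g₁ (Λ / v₁) - v₁ = -v₁ ∧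
    β₁ * ((Λ - v₁ * 0) / μ) * g₁ 0 - v₁ = v₁ * (β₁ * Λ / (μ * v₁) - 1) ∧
    ((∃ i ∈ Set.Ioo (0:ℝ) (Λ / v₁), β₁ * ((Λ - v₁ * i) / μ) * g₁ i - v₁ = 0) ↔
      1 < β₁ * Λ / (μ * v₁)) ∧
    (∀ i ∈ Set.Ioo (0:ℝ) (Λ / v₁), ∀ j ∈ Set.Ioo (0:ℝ) (Λ / v₁),
      β₁ * ((Λ - v₁ * i) / μ) * g₁ i - v₁ = 0 →
      β₁ * ((Λ - v₁ * j) / μ) * g₁ j - v₁ = 0 → i = j) := by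
  set φ : ℝ → ℝ := fun i => β₁ * ((Λ - v₁ * i) / μ) * g₁ i - v₁
  have hφ_anti : StrictAntiOn φ (Icc 0 (Λ / v₁)) :=
    ((strictAnti_mul_sub_mul_div hβ₁ hμ hv₁).strictAntiOn _).mul_antitoneOn_of_nonneg_of_pos
      hg₁anti (fun i hi => mul_sub_mul_div_nonneg hβ₁ hμ hv₁ hi.2)
      (fun i hi => (hg₁pos i hi).1) |>.add_const _
  have hφ_cont : ContinuousOn φ (Icc 0 (Λ / v₁)) := by fun_prop
  have hφ_end : φ (Λ / v₁) = -v₁ := by simp only [φ]; field_simp; ring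
  have hφ_zero : φ 0 = v₁ * (β₁ * Λ / (μ * v₁) - 1) := by simp only [φ, hg₁0]; field_simp; ring
  refine ⟨hφ_anti, hφ_end, hφ_zero, ?_, fun i hi j hj hφi hφj =>
    hφ_anti.injOn (Ioo_subset_Icc_self hi) (Ioo_subset_Icc_self hj) (hφi.trans hφj.symm)⟩
  calc (∃ i ∈ Ioo 0 (Λ / v₁), φ i = 0) ↔ 0 < φ 0 :=
        hφ_anti.exists_mem_Ioo_eq_iff (div_pos hΛ hv₁).le hφ_cont (by linarith)
    _ ↔ 1 < β₁ * Λ / (μ * v₁) := by rw [hφ_zero, mul_pos_iff_of_pos_left hv₁, sub_pos]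
end

section
/- Tie-surface continuum of equilibria: in the scalar + rank-one block model with s' = Λ - μs - β₁si₁ - sℓᵀz, i₁' = (β₁s - v₁)i₁, z' = (s wℓᵀ - V)z, if R₁ = R_b > 1 (equivalently v₁/β₁ = 1/𝓡_b with 𝓡_b = ℓᵀV⁻¹w and Λ𝓡_b/μ > 1... i.e. Λ - μ/𝓡_b > 0), then for every ξ ∈ (0, Λ - μ/𝓡_b), the point E(ξ) = (1/𝓡_b, (Λ - μ/𝓡_b - ξ)/v₁, ξ·V⁻¹w) is an equilibrium of the system with all components nonnegative and s-component and i₁-component positive for ξ in the open interval. -/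
/-!
At `s = 1/𝓡_b` the tie condition `β₁ s = v₁` makes the `i₁`-equation hold identically, and
`s ℓᵀ V⁻¹ w = 1` makes `V⁻¹ w` a null vector of `s w ℓᵀ - V`, so `z = ξ V⁻¹ w` is free. With
`s ℓᵀ z = ξ`, the `s`-equation is linear in `i₁` and fixes `i₁ = (Λ - μ/𝓡_b - ξ)/v₁`, which is
positive exactly for `ξ < Λ - μ/𝓡_b`.
-/

open Finset

theorem sum_mul_const_mul_inv_mul {ι K : Type*} [Fintype ι] [Field K] (ℓ v w : ι → K) (ξ : K) :
    ∑ j, ℓ j * (ξ * (v j)⁻¹ * w j) = ξ * ∑ j, ℓ j * (v j)⁻¹ * w j := by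
  rw [mul_sum]
  exact sum_congr rfl fun j _ => by ring

theorem tie_surface_continuum_general (n : ℕ)
    (w ℓ v : Fin n → ℝ) (Λ μ β₁ v₁ : ℝ)
    (hw : ∀ i, 0 < w i) (hv : ∀ i, 0 < v i)
    (hβ₁ : 0 < β₁) (hv₁ : 0 < v₁)
    (R : ℝ) (hR : R = ∑ j, ℓ j * (v j)⁻¹ * w j)
    (htie : v₁ / β₁ = 1 / R)
    (ξ : ℝ) (hξ : ξ ∈ Set.Ioo 0 (Λ - μ / R)) :
    let sstar : ℝ := 1 / R
    let istar : ℝ := (Λ - μ / R - ξ) / v₁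
    let zstar : Fin n → ℝ := fun j => ξ * (v j)⁻¹ * w j
    (Λ - μ * sstar - β₁ * sstar * istar - sstar * (∑ j, ℓ j * zstar j) = 0) ∧
    ((β₁ * sstar - v₁) * istar = 0) ∧
    (∀ i, sstar * w i * (∑ j, ℓ j * zstar j) - v i * zstar i = 0) ∧
    0 < sstar ∧ 0 < istar ∧ ∀ j, 0 ≤ zstar j := by
  intro sstar istar zstar
  obtain ⟨hξ0, hξΛ⟩ := hξ
  have hs : sstar = v₁ / β₁ := htie.symm
  have hR0 : R ≠ 0 := by
    rintro rfl
    simp only [div_zero, sstar] at hs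
    exact (div_pos hv₁ hβ₁).ne hs
  have hβs : β₁ * sstar = v₁ := by rw [hs, mul_div_cancel₀ _ hβ₁.ne']
  have hLz : sstar * ∑ j, ℓ j * zstar j = ξ := by
    rw [sum_mul_const_mul_inv_mul, ← hR, mul_left_comm, one_div_mul_cancel hR0, mul_one]
  refine ⟨?_, by rw [hβs, sub_self, zero_mul], fun i => ?_, hs ▸ div_pos hv₁ hβ₁,
    div_pos (by linarith) hv₁, fun j => (mul_pos (mul_pos hξ0 (inv_pos.2 (hv j))) (hw j)).le⟩
  · rw [hLz, hβs, mul_div_cancel₀ _ hv₁.ne', mul_one_div]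
    ring
  · have hvz : v i * zstar i = ξ * w i := by
      simp only [zstar]
      field_simp [(hv i).ne']
    rw [mul_right_comm, hLz, hvz, sub_self]

theorem tie_surface_continuum (n : ℕ) (hn : 0 < n)
    (w ℓ v : Fin n → ℝ) (Λ μ β₁ v₁ : ℝ)
    (hw : ∀ i, 0 < w i) (hℓ : ∀ i, 0 < ℓ i) (hv : ∀ i, 0 < v i)
    (hwsum : ∑ i, w i = 1)
    (hΛ : 0 < Λ) (hμ : 0 < μ) (hβ₁ : 0 < β₁) (hv₁ : 0 < v₁)
    (R : ℝ) (hR : R = ∑ j, ℓ j * (v j)⁻¹ * w j)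
    (htie : v₁ / β₁ = 1 / R) (hthr : μ / R < Λ)
    (ξ : ℝ) (hξ : ξ ∈ Set.Ioo 0 (Λ - μ / R)) :
    let sstar : ℝ := 1 / R
    let istar : ℝ := (Λ - μ / R - ξ) / v₁
    let zstar : Fin n → ℝ := fun j => ξ * (v j)⁻¹ * w j
    (Λ - μ * sstar - β₁ * sstar * istar - sstar * (∑ j, ℓ j * zstar j) = 0) ∧
    ((β₁ * sstar - v₁) * istar = 0) ∧
    (∀ i, sstar * w i * (∑ j, ℓ j * zstar j) - v i * zstar i = 0) ∧
    0 < sstar ∧ 0 < istar ∧ ∀ j, 0 ≤ zstar j :=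
  tie_surface_continuum_general n w ℓ v Λ μ β₁ v₁ hw hv hβ₁ hv₁ R hR htie ξ hξ
end
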